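/- For every nonempty finite trace π = π₀,…,π_n over 2^P and every propositional formula G over P: π satisfies the LTLf formula □G under standard LTLf finite-trace semantics at position 0 (i.e., G holds at every position 0 ≤ j ≤ n) if and only if π ⊨ ⟨G*⟩end under LDLf semantics. -/

import Mathlib

/-- Propositional formulas over atomic propositions `P`. -/
inductive PropForm (P : Type) : Type
  | tru : PropForm P
  | atom : P → PropForm P
  | not : PropForm P → PropForm P
  | and : PropForm P → PropForm P → PropForm P

/-- Satisfaction of a propositional formula by an interpretation (subset of `P`). -/
def PropForm.Sat {P : Type} (I : Set P) : PropForm P → Prop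
  | .tru => True
  | .atom p => p ∈ I
  | .not ϕ => ¬ PropForm.Sat I ϕ
  | .and ϕ ψ => PropForm.Sat I ϕ ∧ PropForm.Sat I ψ

mutual
/-- LDLf formulas over atomic propositions `P`. -/
inductive LDLf (P : Type) : Type
  | tt : LDLf P
  | neg : LDLf P → LDLf P
  | conj : LDLf P → LDLf P → LDLf P
  | dia : PathExp P → LDLf P → LDLf P

/-- Path expressions of LDLf. -/
inductive PathExp (P : Type) : Type
  | prop : PropForm P → PathExp P
  | test : LDLf P → PathExp P
  | plus : PathExp P → PathExp P → PathExp P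
  | comp : PathExp P → PathExp P → PathExp P
  | star : PathExp P → PathExp P
end

mutual
/-- `LDLf.SatAt π φ i` : the LDLf formula `φ` is true at position `i` of the finite trace `π`. -/
def LDLf.SatAt {P : Type} (π : List (Set P)) : LDLf P → ℕ → Prop
  | .tt => fun _ => True
  | .neg φ => fun i => ¬ LDLf.SatAt π φ i
  | .conj φ₁ φ₂ => fun i => LDLf.SatAt π φ₁ i ∧ LDLf.SatAt π φ₂ i
  | .dia ρ φ => fun i => ∃ j, i ≤ j ∧ j ≤ π.length ∧ PathExp.Sem π ρ i j ∧ LDLf.SatAt π φ j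

/-- `PathExp.Sem π ρ i j` : the relation `π(i,j) ∈ L(ρ)`. -/
def PathExp.Sem {P : Type} (π : List (Set P)) : PathExp P → ℕ → ℕ → Prop
  | .prop ϕ => fun i j => j = i + 1 ∧ j ≤ π.length ∧ PropForm.Sat (π.getD i ∅) ϕ
  | .test ψ => fun i j => j = i ∧ LDLf.SatAt π ψ i
  | .plus ρ₁ ρ₂ => fun i j => PathExp.Sem π ρ₁ i j ∨ PathExp.Sem π ρ₂ i j
  | .comp ρ₁ ρ₂ => fun i j => ∃ k, PathExp.Sem π ρ₁ i k ∧ PathExp.Sem π ρ₂ k j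
  | .star ρ => Relation.ReflTransGen (PathExp.Sem π ρ)
end

/-- `[ρ]φ ≐ ¬⟨ρ⟩¬φ`. -/
def LDLf.box {P : Type} (ρ : PathExp P) (φ : LDLf P) : LDLf P := .neg (.dia ρ (.neg φ))

/-- `ff ≐ ¬tt`. -/
def LDLf.ff {P : Type} : LDLf P := .neg .tt

/-- A propositional formula `ϕ` used as an LDLf formula stands for `⟨ϕ⟩tt`. -/
def LDLf.ofProp {P : Type} (ϕ : PropForm P) : LDLf P := .dia (.prop ϕ) .tt

/-- `end ≐ [true?]ff`. -/
def LDLf.endf {P : Type} : LDLf P := LDLf.box (.test (LDLf.ofProp .tru)) LDLf.ff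

/-- `last ≐ [true]end`. -/
def LDLf.lastf {P : Type} : LDLf P := LDLf.box (.prop .tru) LDLf.endf

/-- `π ⊨ φ` means `π,0 ⊨ φ`. -/
def LDLf.Sat {P : Type} (π : List (Set P)) (φ : LDLf P) : Prop := LDLf.SatAt π φ 0

/-- LTLf formulas over atomic propositions `P`. -/
inductive LTLf (P : Type) : Type
  | prop : PropForm P → LTLf P
  | neg : LTLf P → LTLf P
  | conj : LTLf P → LTLf P → LTLf P
  | next : LTLf P → LTLf P
  | untl : LTLf P → LTLf P → LTLf P

/-- Standard LTLf finite-trace semantics: `LTLf.SatAt π φ i` means `φ` holds at position `i`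
of the nonempty finite trace `π`. -/
def LTLf.SatAt {P : Type} (π : List (Set P)) : LTLf P → ℕ → Prop
  | .prop ϕ => fun i => PropForm.Sat (π.getD i ∅) ϕ
  | .neg φ => fun i => ¬ LTLf.SatAt π φ i
  | .conj φ₁ φ₂ => fun i => LTLf.SatAt π φ₁ i ∧ LTLf.SatAt π φ₂ i
  | .next φ => fun i => i + 1 < π.length ∧ LTLf.SatAt π φ (i + 1)
  | .untl φ₁ φ₂ => fun i => ∃ j, i ≤ j ∧ j < π.length ∧ LTLf.SatAt π φ₂ j ∧
      ∀ k, i ≤ k → k < j → LTLf.SatAt π φ₁ k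

/-- `◇φ ≐ true U φ`. -/
def LTLf.ev {P : Type} (φ : LTLf P) : LTLf P := .untl (.prop .tru) φ

/-- `□φ ≐ ¬◇¬φ`. -/
def LTLf.always {P : Type} (φ : LTLf P) : LTLf P := .neg (LTLf.ev (.neg φ))

/-- `last ≐ ¬○true`: holds at `i` iff `i` is the final position of the trace. -/
def LTLf.lastf {P : Type} : LTLf P := .neg (.next (.prop .tru))

/-- `π ⊨ φ` means `φ` holds at position `0` of `π`. -/
def LTLf.Sat {P : Type} (π : List (Set P)) (φ : LTLf P) : Prop := LTLf.SatAt π φ 0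

/-! `G*` relates `i` to `j` exactly when `G` holds at the positions `i, …, j - 1`, and `end`
holds exactly at `π.length`, one past the last position; so `⟨G*⟩end` says that `G` holds at
every position of `π`, which is what `□G` says. -/

theorem LDLf.satAt_ofProp_tru_iff {P : Type} (π : List (Set P)) (i : ℕ) :
    LDLf.SatAt π (LDLf.ofProp .tru) i ↔ i < π.length := by
  constructor
  · rintro ⟨_, -, -, ⟨rfl, hlt, -⟩, -⟩
    exact hlt
  · intro hlt
    exact ⟨i + 1, i.le_succ, hlt, ⟨rfl, hlt, trivial⟩, trivial⟩

theorem LDLf.satAt_endf_iff {P : Type} (π : List (Set P)) (i : ℕ) :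
    LDLf.SatAt π LDLf.endf i ↔ π.length ≤ i := by
  simp only [LDLf.endf, LDLf.box, LDLf.ff, LDLf.SatAt, PathExp.Sem, LDLf.satAt_ofProp_tru_iff,
    not_not, and_true, not_exists, not_and]
  constructor
  · intro h
    by_contra hlt
    exact h i le_rfl (by omega) rfl (by omega)
  · rintro h _ - - rfl hlt
    omega

theorem LTLf.satAt_always_prop_iff {P : Type} (π : List (Set P)) (G : PropForm P) (i : ℕ) :
    LTLf.SatAt π (LTLf.always (.prop G)) i ↔ ∀ k, i ≤ k → k < π.length → G.Sat (π.getD k ∅) := by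
  simp only [LTLf.always, LTLf.ev, LTLf.SatAt, PropForm.Sat]
  grind

theorem PathExp.sem_star_prop_iff {P : Type} (π : List (Set P)) (G : PropForm P) {i j : ℕ}
    (hi : i ≤ π.length) :
    PathExp.Sem π (.star (.prop G)) i j ↔
      i ≤ j ∧ j ≤ π.length ∧ ∀ k, i ≤ k → k < j → G.Sat (π.getD k ∅) := by
  constructor
  · intro h
    induction h with
    | refl => exact ⟨le_rfl, hi, fun k hik hki => absurd hki (by omega)⟩
    | tail _ hstep ih =>
      obtain ⟨rfl, hlen, hG⟩ := hstep
      obtain ⟨hij, -, hpre⟩ := ih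
      refine ⟨by omega, hlen, fun k hik hk => ?_⟩
      rcases Nat.lt_succ_iff_lt_or_eq.mp hk with hk | rfl
      exacts [hpre k hik hk, hG]
  · rintro ⟨hij, hj, hG⟩
    induction j, hij using Nat.le_induction with
    | base => exact .refl
    | succ j hij ih =>
      exact .tail (ih (by omega) fun k hik hk => hG k hik (by omega))
        ⟨rfl, hj, hG j hij j.lt_succ_self⟩

theorem LDLf.satAt_dia_star_prop_endf_iff {P : Type} (π : List (Set P)) (G : PropForm P)
    (i : ℕ) :
    LDLf.SatAt π (.dia (.star (.prop G)) LDLf.endf) i ↔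
      i ≤ π.length ∧ ∀ k, i ≤ k → k < π.length → G.Sat (π.getD k ∅) := by
  constructor
  · rintro ⟨j, hij, hj, hstar, hend⟩
    obtain rfl : j = π.length := le_antisymm hj ((LDLf.satAt_endf_iff π j).mp hend)
    exact ⟨hij, ((PathExp.sem_star_prop_iff π G hij).mp hstar).2.2⟩
  · rintro ⟨hi, hG⟩
    exact ⟨π.length, hi, le_rfl, (PathExp.sem_star_prop_iff π G hi).mpr ⟨hi, le_rfl, hG⟩,
      (LDLf.satAt_endf_iff π _).mpr le_rfl⟩

/-- On nonempty finite traces, the LTLf formula `□G` is equivalent to the LDLf formula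
`⟨G*⟩end`. -/
theorem ltlf_always_iff_ldlf {P : Type} (π : List (Set P)) (hπ : π ≠ [])
    (G : PropForm P) :
    LTLf.Sat π (LTLf.always (.prop G)) ↔
      LDLf.Sat π (.dia (.star (.prop G)) LDLf.endf) := by
  rw [LTLf.Sat, LDLf.Sat, LTLf.satAt_always_prop_iff, LDLf.satAt_dia_star_prop_endf_iff]
  exact (and_iff_right π.length.zero_le).symm
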